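/- arXiv:1801.05381 — 6 statements merged into one kernel-verified Lean document; each statement's English description precedes it below -/
import Mathlib

section
/- For all d ≥ 2, applying the derivation ∂₁ entrywise to the vector w_d gives a vector congruent modulo 2 to A_{d−1} w_{d+1}; that is, every entry of ∂₁(w_d) − A_{d−1} w_{d+1} has all of its integer coefficients even. -/
/- ℌ = ℚ⟨x,y⟩ realized as the monoid algebra of the free monoid on two letters,
   where `false` plays the role of the letter x and `true` of the letter y. -/
noncomputable section

abbrev H : Type := MonoidAlgebra ℚ (FreeMonoid Bool)

/-- The letter x. -/
def X : H := MonoidAlgebra.single (FreeMonoid.of false) 1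

/-- The letter y. -/
def Y : H := MonoidAlgebra.single (FreeMonoid.of true) 1

/-- The `n`-th (0-indexed) monomial of degree `d` in xℌy, in lexicographic
order with x < y: it is x, followed by the big-endian binary expansion of `n`
of length `d - 2` (false = x, true = y), followed by y. -/
def wordList (d n : ℕ) : List Bool :=
  (false :: (List.range (d - 2)).map fun k => Nat.testBit n (d - 3 - k)) ++ [true]

def word (d n : ℕ) : FreeMonoid Bool := FreeMonoid.ofList (wordList d n)

/-- The vector `w_d` of all `2^(d-2)` monomials of degree `d` in xℌy, in
lexicographic order. -/
def wVec (d : ℕ) : Fin (2 ^ (d - 2)) → H := fun i => MonoidAlgebra.single (word d i) 1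

/-- `p ≡ 0 (mod 2)`: all (integer) coefficients of `p` are even. -/
def Even2 (p : H) : Prop := ∀ m : FreeMonoid Bool, ∃ k : ℤ, p.coeff m = 2 * k

/-- `Afun m i j` is the `(i,j)` entry (0-indexed) of the matrix `A_{m+1}`,
so `A_n = Afun (n-1)`.  `A_1 = (1 1)` and `A_n` is built from the block rows
`(A_{n-1} | E | 0)` and `(0 | E | A_{n-1})`. -/
def Afun : ℕ → ℕ → ℕ → ℤ
  | 0, i, j => if i = 0 ∧ (j = 0 ∨ j = 1) then 1 else 0
  | m + 1, i, j =>
    if i < 2 ^ m then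
      if j < 2 ^ (m + 1) then Afun m i j
      else if j < 2 ^ (m + 1) + 2 ^ m then (if j = i + 2 ^ (m + 1) then 1 else 0)
      else 0
    else
      if j < 2 ^ m then 0
      else if j < 2 ^ (m + 1) then (if j = i then 1 else 0)
      else Afun m (i - 2 ^ m) (j - 2 ^ (m + 1))

/- Over ℚ, `∂₁` sends a word to the signed sum of the words obtained by replacing one of its
letters by `xy`, the sign being `-1` exactly when the replaced letter is `y`. Modulo 2 the signs
disappear, leaving the unsigned sum `sumSubstXY`, which is computed exactly: the quantity
`Q t = sumSubstXY t + y t` satisfies `Q (c t) = (¬c) c t + c Q(t)` for a letter `c`, and this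
recursion matches the block recursion of `A_n`, row by row, on binary expansions. -/

def ofWord (l : List Bool) : H := MonoidAlgebra.single (FreeMonoid.ofList l) 1

theorem ofWord_nil : ofWord [] = 1 := rfl

theorem ofWord_append (a b : List Bool) : ofWord (a ++ b) = ofWord a * ofWord b := by
  rw [ofWord, ofWord, ofWord, MonoidAlgebra.single_mul_single, one_mul, FreeMonoid.ofList_append]

theorem ofWord_cons (c : Bool) (t : List Bool) : ofWord (c :: t) = ofWord [c] * ofWord t :=
  ofWord_append [c] t

def substXY (l : List Bool) (k : ℕ) : List Bool := l.take k ++ [false, true] ++ l.drop (k + 1)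

@[simp]
theorem substXY_cons_zero (c : Bool) (t : List Bool) : substXY (c :: t) 0 = false :: true :: t :=
  rfl

@[simp]
theorem substXY_cons_succ (c : Bool) (t : List Bool) (k : ℕ) :
    substXY (c :: t) (k + 1) = c :: substXY t k := by
  simp [substXY]

def sumSubstXY (l : List Bool) : H := ∑ k : Fin l.length, ofWord (substXY l k)

theorem sumSubstXY_cons (c : Bool) (t : List Bool) :
    sumSubstXY (c :: t) = ofWord (false :: true :: t) + ofWord [c] * sumSubstXY t := by
  simp only [sumSubstXY, List.length_cons, Fin.sum_univ_succ, Fin.val_zero, Fin.val_succ,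
    substXY_cons_zero, substXY_cons_succ, Finset.mul_sum, ← ofWord_cons]

theorem even2_zero : Even2 0 := fun _ => ⟨0, by simp⟩

theorem even2_add {p q : H} (hp : Even2 p) (hq : Even2 q) : Even2 (p + q) := by
  intro w
  obtain ⟨a, ha⟩ := hp w
  obtain ⟨b, hb⟩ := hq w
  refine ⟨a + b, ?_⟩
  rw [MonoidAlgebra.coeff_add, Finsupp.add_apply, ha, hb]
  push_cast
  ring

theorem even2_two_mul_smul_ofWord (z : ℤ) (l : List Bool) :
    Even2 ((2 * z : ℚ) • ofWord l) := by
  classical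
  intro w
  refine ⟨if FreeMonoid.ofList l = w then z else 0, ?_⟩
  rw [ofWord, MonoidAlgebra.coeff_smul_apply, MonoidAlgebra.coeff_single, Finsupp.single_apply]
  split_ifs <;> simp

section Derivation

variable {D : H →ₗ[ℚ] H}

theorem map_one_of_leibniz (hleib : ∀ a b : H, D (a * b) = D a * b + a * D b) : D 1 = 0 := by
  simpa using hleib 1 1

theorem map_ofWord_singleton (hDx : D X = X * Y) (hDy : D Y = -(X * Y)) (c : Bool) :
    D (ofWord [c]) = (if c then -1 else 1 : ℚ) • ofWord [false, true] := by
  have hXY : ofWord [false, true] = X * Y := ofWord_cons false [true]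
  cases c
  · simp only [Bool.false_eq_true, if_false, one_smul, hXY]
    exact hDx
  · simp only [if_true, neg_one_smul, hXY]
    exact hDy

theorem map_ofWord (hleib : ∀ a b : H, D (a * b) = D a * b + a * D b)
    (hDx : D X = X * Y) (hDy : D Y = -(X * Y)) (l : List Bool) :
    D (ofWord l) =
      ∑ k : Fin l.length, (if l[k] then -1 else 1 : ℚ) • ofWord (substXY l k) := by
  induction l with
  | nil => simp [ofWord_nil, map_one_of_leibniz hleib]
  | cons c t ih =>
    rw [ofWord_cons, hleib, ih, map_ofWord_singleton hDx hDy]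
    simp only [List.length_cons, Fin.sum_univ_succ, Finset.mul_sum, mul_smul_comm, smul_mul_assoc,
      ← ofWord_append]
    rfl

theorem even2_map_ofWord_sub_sumSubstXY (hleib : ∀ a b : H, D (a * b) = D a * b + a * D b)
    (hDx : D X = X * Y) (hDy : D Y = -(X * Y)) (l : List Bool) :
    Even2 (D (ofWord l) - sumSubstXY l) := by
  rw [map_ofWord hleib hDx hDy, sumSubstXY, ← Finset.sum_sub_distrib]
  refine Finset.sum_induction _ Even2 (fun _ _ => even2_add) even2_zero fun k _ => ?_
  have hsign : (if l[k] then -1 else 1 : ℚ) - 1 = 2 * ((if l[k] then -1 else 0 : ℤ) : ℚ) := by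
    split_ifs <;> norm_num
  have := even2_two_mul_smul_ofWord (if l[k] then -1 else 0) (substXY l k)
  rwa [← hsign, sub_smul, one_smul] at this

end Derivation

def bits (m n : ℕ) : List Bool := (List.range m).map fun k => Nat.testBit n (m - 1 - k)

theorem wordList_add_two (m n : ℕ) : wordList (m + 2) n = false :: (bits m n ++ [true]) := rfl

theorem bits_succ (m n : ℕ) : bits (m + 1) n = Nat.testBit n m :: bits m n := by
  simp only [bits, List.range_succ_eq_map, List.map_cons, List.map_map, Nat.add_sub_cancel,
    Nat.sub_zero]
  congr 1
  refine List.map_congr_left fun k _ => ?_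
  simp [Function.comp, Nat.sub_sub, Nat.add_comm]

theorem bits_succ_of_lt {m n : ℕ} (hn : n < 2 ^ m) : bits (m + 1) n = false :: bits m n := by
  rw [bits_succ, Nat.testBit_lt_two_pow hn]

theorem bits_succ_two_pow_add {m n : ℕ} (hn : n < 2 ^ m) :
    bits (m + 1) (2 ^ m + n) = true :: bits m n := by
  rw [bits_succ, Nat.testBit_two_pow_add_eq, Nat.testBit_lt_two_pow hn]
  congr 1
  refine List.map_congr_left fun k hk => ?_
  rw [List.mem_range] at hk
  exact Nat.testBit_two_pow_add_gt (by omega) n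

section BlockRows

theorem Afun_succ_of_lt_of_lt {m i j : ℕ} (hi : i < 2 ^ m) (hj : j < 2 ^ (m + 1)) :
    Afun (m + 1) i j = Afun m i j := by
  simp only [Afun]
  rw [if_pos hi, if_pos hj]

theorem Afun_succ_of_lt_two_pow_add {m i : ℕ} (hi : i < 2 ^ m) (j : ℕ) :
    Afun (m + 1) i (2 ^ (m + 1) + j) = if j = i then 1 else 0 := by
  simp only [Afun]
  split_ifs <;> first | rfl | omega

theorem Afun_succ_two_pow_add_of_lt {m j : ℕ} (i : ℕ) (hj : j < 2 ^ (m + 1)) :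
    Afun (m + 1) (2 ^ m + i) j = if j = 2 ^ m + i then 1 else 0 := by
  simp only [Afun]
  split_ifs <;> first | rfl | omega

theorem Afun_succ_two_pow_add_two_pow_add (m i j : ℕ) :
    Afun (m + 1) (2 ^ m + i) (2 ^ (m + 1) + j) = Afun m i j := by
  have h : 2 ^ m ≤ 2 ^ (m + 1) := Nat.pow_le_pow_right two_pos m.le_succ
  simp only [Afun]
  rw [if_neg (by omega), if_neg (by omega), if_neg (by omega), Nat.add_sub_cancel_left,
    Nat.add_sub_cancel_left]

variable {M : Type*} [AddCommGroup M]

theorem sum_range_two_pow_succ (m : ℕ) (f : ℕ → M) :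
    ∑ j ∈ Finset.range (2 ^ (m + 1)), f j =
      ∑ j ∈ Finset.range (2 ^ m), f j + ∑ j ∈ Finset.range (2 ^ m), f (2 ^ m + j) := by
  rw [pow_succ, mul_two, Finset.sum_range_add]

theorem sum_Afun_succ_smul_of_lt {m i : ℕ} (hi : i < 2 ^ m) (f : ℕ → M) :
    ∑ j ∈ Finset.range (2 ^ (m + 2)), Afun (m + 1) i j • f j =
      ∑ j ∈ Finset.range (2 ^ (m + 1)), Afun m i j • f j + f (2 ^ (m + 1) + i) := by
  rw [sum_range_two_pow_succ]
  congr 1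
  · refine Finset.sum_congr rfl fun j hj => ?_
    rw [Afun_succ_of_lt_of_lt hi (Finset.mem_range.mp hj)]
  · have hi' : i ∈ Finset.range (2 ^ (m + 1)) := Finset.mem_range.mpr (by omega)
    rw [Finset.sum_congr rfl fun j hj => by
      rw [Afun_succ_of_lt_two_pow_add hi, ite_smul, one_smul, zero_smul]]
    rw [Finset.sum_ite_eq' _ _ _, if_pos hi']

theorem sum_Afun_succ_two_pow_add_smul {m i : ℕ} (hi : i < 2 ^ m) (f : ℕ → M) :
    ∑ j ∈ Finset.range (2 ^ (m + 2)), Afun (m + 1) (2 ^ m + i) j • f j =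
      f (2 ^ m + i) + ∑ j ∈ Finset.range (2 ^ (m + 1)), Afun m i j • f (2 ^ (m + 1) + j) := by
  rw [sum_range_two_pow_succ]
  congr 1
  · have hi' : 2 ^ m + i ∈ Finset.range (2 ^ (m + 1)) := Finset.mem_range.mpr (by omega)
    rw [Finset.sum_congr rfl fun j hj => by
      rw [Afun_succ_two_pow_add_of_lt i (Finset.mem_range.mp hj), ite_smul, one_smul, zero_smul]]
    rw [Finset.sum_ite_eq' _ _ _, if_pos hi']
  · simp only [Afun_succ_two_pow_add_two_pow_add]

end BlockRows

theorem sumSubstXY_add_ofWord_true_cons (c : Bool) (t : List Bool) :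
    sumSubstXY (c :: t) + ofWord (true :: c :: t) =
      ofWord ((!c) :: c :: t) + ofWord [c] * (sumSubstXY t + ofWord (true :: t)) := by
  rw [sumSubstXY_cons, mul_add, ← ofWord_cons]
  cases c <;> simp only [Bool.not_false, Bool.not_true] <;> abel

theorem sumSubstXY_bits_add_ofWord (m : ℕ) {i : ℕ} (hi : i < 2 ^ m) :
    sumSubstXY (bits m i ++ [true]) + ofWord (true :: (bits m i ++ [true])) =
      ∑ j ∈ Finset.range (2 ^ (m + 1)), Afun m i j • ofWord (bits (m + 1) j ++ [true]) := by
  induction m generalizing i with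
  | zero =>
    obtain rfl : i = 0 := by simpa using hi
    have hS : sumSubstXY [true] = ofWord [false, true] := by simp [sumSubstXY]
    simp [Finset.sum_range_succ, Afun, bits, hS]
  | succ m ih =>
    rcases lt_or_ge i (2 ^ m) with hlo | hhi
    · rw [bits_succ_of_lt hlo, List.cons_append, sumSubstXY_add_ofWord_true_cons, ih hlo,
        sum_Afun_succ_smul_of_lt hlo, Finset.mul_sum, add_comm]
      congr 1
      · refine Finset.sum_congr rfl fun j hj => ?_
        rw [mul_smul_comm, ← ofWord_cons, bits_succ_of_lt (Finset.mem_range.mp hj)]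
        rfl
      · rw [bits_succ_two_pow_add hi, bits_succ_of_lt hlo]
        rfl
    · obtain ⟨i, rfl⟩ : ∃ i', i = 2 ^ m + i' := ⟨i - 2 ^ m, by omega⟩
      have hi' : i < 2 ^ m := by rw [pow_succ] at hi; omega
      rw [bits_succ_two_pow_add hi', List.cons_append, sumSubstXY_add_ofWord_true_cons, ih hi',
        sum_Afun_succ_two_pow_add_smul hi', Finset.mul_sum]
      congr 1
      · rw [bits_succ_of_lt hi, bits_succ_two_pow_add hi']
        rfl
      · refine Finset.sum_congr rfl fun j hj => ?_
        rw [mul_smul_comm, ← ofWord_cons, bits_succ_two_pow_add (Finset.mem_range.mp hj)]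
        rfl

theorem sumSubstXY_wordList (m : ℕ) {i : ℕ} (hi : i < 2 ^ m) :
    sumSubstXY (wordList (m + 2) i) =
      ∑ j ∈ Finset.range (2 ^ (m + 1)), Afun m i j • ofWord (wordList (m + 3) j) := by
  rw [wordList_add_two, sumSubstXY_cons, ofWord_cons false (true :: _), ← mul_add, add_comm,
    sumSubstXY_bits_add_ofWord m hi, Finset.mul_sum]
  refine Finset.sum_congr rfl fun j _ => ?_
  rw [mul_smul_comm, ← ofWord_cons]
  rfl

/-- Let `D = ∂₁` be the (unique) derivation of ℌ with
`∂₁(x) = xy` and `∂₁(y) = -xy`.  For all `d ≥ 2`, applying `∂₁` entrywise to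
the vector `w_d` gives a vector congruent mod 2 to `A_{d-1} w_{d+1}`:
every entry of `∂₁(w_d) - A_{d-1} w_{d+1}` has all integer coefficients even. -/
theorem statement0 (D : H →ₗ[ℚ] H)
    (hleib : ∀ a b : H, D (a * b) = D a * b + a * D b)
    (hDx : D X = X * Y) (hDy : D Y = -(X * Y))
    (d : ℕ) (hd : 2 ≤ d) (i : Fin (2 ^ (d - 2))) :
    Even2 (D (wVec d i) -
      ∑ j : Fin (2 ^ (d - 1)), ((Afun (d - 2) (i : ℕ) (j : ℕ) : ℚ)) • wVec (d + 1) j) := by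
  obtain ⟨m, rfl⟩ : ∃ m, d = m + 2 := ⟨d - 2, by omega⟩
  have hA : ∑ j : Fin (2 ^ (m + 1)), ((Afun m i j : ℚ)) • wVec (m + 3) j =
      sumSubstXY (wordList (m + 2) i) := by
    simp only [Int.cast_smul_eq_zsmul, sumSubstXY_wordList m i.isLt]
    exact Fin.sum_univ_eq_sum_range (fun j => Afun m i j • ofWord (wordList (m + 3) j)) _
  exact hA ▸ even2_map_ofWord_sub_sumSubstXY hleib hDx hDy (wordList (m + 2) i)

end
end

section
/- For all d ≥ 2 the determinant of the square integer matrix A_{d−1} ℰ_{d−1}^{(2)} of size 2^{d−2} is odd: det(A_{d−1} ℰ_{d−1}^{(2)}) ≡ 1 (mod 2). -/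
/-- The `2^(n-1) × 2^n` integer matrix `A_n` (for `n ≥ 1`). -/
def Amat (n : ℕ) : Matrix (Fin (2 ^ (n - 1))) (Fin (2 ^ n)) ℤ :=
  Matrix.of fun i j => Afun (n - 1) (i : ℕ) (j : ℕ)

/-- The `2^d × 2^(d-1)` integer matrix `ℰ_d^{(2)}`, with entries
`1` at `(i,j) = (2j, j)` in 0-indexed terms (i.e. `i = 2j` 1-indexed) and `0`
elsewhere. -/
def E2mat (d : ℕ) : Matrix (Fin (2 ^ d)) (Fin (2 ^ (d - 1))) ℤ :=
  Matrix.of fun i j => if (i : ℕ) = 2 * (j : ℕ) + 1 then 1 else 0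

theorem Afun_even_odd (m : ℕ) : ∀ i j : ℕ, 2 * i < 2 ^ m → 2 * j + 1 < 2 ^ (m + 1) →
    Afun m (2 * i) (2 * j + 1) = if j = 2 * i then 1 else 0 := by
  induction m with
  | zero =>
    intro i j hi hj
    obtain rfl : i = 0 := by omega
    obtain rfl : j = 0 := by omega
    rfl
  | succ m ih =>
    intro i j hi hj
    have hpow : 2 ^ (m + 1) = 2 * 2 ^ m := by ring
    set δ : ℤ := if j = 2 * i then 1 else 0 with hδ
    rw [Afun]
    split_ifs with h1 h2
    · exact ih i j h1 h2
    all_goals first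
      | omega
      | rw [hδ, if_pos (by omega)]
      | rw [hδ, if_neg (by omega)]
      | skip
    cases m with
    | zero => omega
    | succ m =>
      rw [show 2 * i - 2 ^ (m + 1) = 2 * (i - 2 ^ m) by omega,
        show 2 * j + 1 - 2 ^ (m + 1 + 1) = 2 * (j - 2 ^ (m + 1)) + 1 by omega,
        ih _ _ (by omega) (by omega)]
      exact if_congr (by omega) rfl rfl

theorem Afun_odd_odd (m : ℕ) : ∀ k l : ℕ, k < 2 ^ m → l < 2 ^ m →
    Afun (m + 1) (2 * k + 1) (4 * l + 3) = Afun m k (2 * l + 1) := by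
  induction m with
  | zero =>
    intro k l hk hl
    obtain rfl : k = 0 := by omega
    obtain rfl : l = 0 := by omega
    rfl
  | succ m ih =>
    intro k l hk hl
    have hpow : 2 ^ (m + 1) = 2 * 2 ^ m := by ring
    have hpow' : 2 ^ (m + 1 + 1) = 4 * 2 ^ m := by ring
    conv_lhs => rw [Afun]
    conv_rhs => rw [Afun]
    split_ifs <;> first | omega | rfl | skip
    · exact ih k l (by omega) (by omega)
    · rw [show 2 * k + 1 - 2 ^ (m + 1) = 2 * (k - 2 ^ m) + 1 by omega,
        show 4 * l + 3 - 2 ^ (m + 1 + 1) = 4 * (l - 2 ^ m) + 3 by omega,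
        show 2 * l + 1 - 2 ^ (m + 1) = 2 * (l - 2 ^ m) + 1 by omega,
        ih _ _ (by omega) (by omega)]

def evenOddEquiv (d : ℕ) : Fin (2 ^ d) ⊕ Fin (2 ^ d) ≃ Fin (2 ^ (d + 1)) where
  toFun := Sum.elim (fun k => ⟨2 * k, by rw [pow_succ]; omega⟩)
    (fun k => ⟨2 * k + 1, by rw [pow_succ]; omega⟩)
  invFun j := if (j : ℕ) % 2 = 0
    then .inl ⟨j / 2, by have := pow_succ 2 d; omega⟩
    else .inr ⟨j / 2, by have := pow_succ 2 d; omega⟩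
  left_inv := by
    rintro (k | k)
    · simp
    · simp [Fin.ext_iff]; omega
  right_inv j := by
    by_cases h : (j : ℕ) % 2 = 0 <;> simp [h, Fin.ext_iff] <;> omega

theorem Matrix.det_eq_det_mul_det_of_submatrix_inl_inr_eq_zero {ι κ ν R : Type*}
    [Fintype ι] [Fintype κ] [Fintype ν] [DecidableEq ι] [DecidableEq κ] [DecidableEq ν]
    [CommRing R] (e : ι ⊕ κ ≃ ν) (M : Matrix ν ν R)
    (h : M.submatrix (e ∘ Sum.inl) (e ∘ Sum.inr) = 0) :
    M.det = (M.submatrix (e ∘ Sum.inl) (e ∘ Sum.inl)).det *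
      (M.submatrix (e ∘ Sum.inr) (e ∘ Sum.inr)).det := by
  have h₁₂ : (M.submatrix e e).toBlocks₁₂ = 0 := h
  rw [← det_submatrix_equiv_self e M, ← fromBlocks_toBlocks (M.submatrix e e), h₁₂,
    det_fromBlocks_zero₁₂]
  rfl

def AoddCols (m : ℕ) : Matrix (Fin (2 ^ m)) (Fin (2 ^ m)) ℤ :=
  Matrix.of fun i j => Afun m i (2 * j + 1)

theorem det_AoddCols (m : ℕ) : (AoddCols m).det = 1 := by
  induction m with
  | zero => exact Matrix.det_fin_one (AoddCols 0)
  | succ m ih =>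
    set e := evenOddEquiv m
    have hpow : 2 ^ (m + 1) = 2 * 2 ^ m := by ring
    have h_even_even : (AoddCols (m + 1)).submatrix (e ∘ Sum.inl) (e ∘ Sum.inl) = 1 := by
      ext k l
      show Afun (m + 1) (2 * k) (2 * (2 * l) + 1) = (1 : Matrix _ _ ℤ) k l
      rw [Afun_even_odd _ _ _ (by omega) (by omega), Matrix.one_apply]
      exact if_congr (by rw [Fin.ext_iff]; omega) rfl rfl
    have h_even_odd : (AoddCols (m + 1)).submatrix (e ∘ Sum.inl) (e ∘ Sum.inr) = 0 := by
      ext k l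
      show Afun (m + 1) (2 * k) (2 * (2 * l + 1) + 1) = 0
      rw [Afun_even_odd _ _ _ (by omega) (by omega), if_neg (by omega)]
    have h_odd_odd : (AoddCols (m + 1)).submatrix (e ∘ Sum.inr) (e ∘ Sum.inr) = AoddCols m := by
      ext k l
      show Afun (m + 1) (2 * k + 1) (2 * (2 * l + 1) + 1) = Afun m k (2 * l + 1)
      rw [show 2 * (2 * (l : ℕ) + 1) + 1 = 4 * l + 3 by ring]
      exact Afun_odd_odd m k l k.2 l.2
    calc (AoddCols (m + 1)).det
        = _ := Matrix.det_eq_det_mul_det_of_submatrix_inl_inr_eq_zero e _ h_even_odd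
      _ = 1 := by rw [h_even_even, h_odd_odd, Matrix.det_one, one_mul, ih]

theorem mul_E2mat_apply {ι : Type*} {d : ℕ} (M : Matrix ι (Fin (2 ^ (d + 1))) ℤ) (i : ι)
    (j : Fin (2 ^ d)) :
    (M * E2mat (d + 1)) i j = M i (evenOddEquiv d (.inr j)) := by
  rw [Matrix.mul_apply, Finset.sum_eq_single (evenOddEquiv d (.inr j))]
  · simp [E2mat, evenOddEquiv]
  · intro k _ hk
    have hk' : (k : ℕ) ≠ 2 * j + 1 := fun h => hk (Fin.ext h)
    simp [E2mat, hk']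
  · simp

theorem Amat_mul_E2mat (m : ℕ) : Amat (m + 1) * E2mat (m + 1) = AoddCols m := by
  ext i j
  rw [mul_E2mat_apply]
  rfl

/-- For all `d ≥ 2` the determinant of the square integer
matrix `A_{d-1} ℰ_{d-1}^{(2)}` of size `2^(d-2)` is odd:
`det(A_{d-1} ℰ_{d-1}^{(2)}) ≡ 1 (mod 2)`. -/
theorem statement3 (d : ℕ) (hd : 2 ≤ d) :
    Int.ModEq 2 (Matrix.det (Amat (d - 1) * E2mat (d - 1))) 1 := by
  obtain ⟨m, rfl⟩ : ∃ m, d = m + 2 := ⟨d - 2, by omega⟩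
  show Int.ModEq 2 (Amat (m + 1) * E2mat (m + 1)).det 1
  rw [Amat_mul_E2mat, det_AoddCols]
end

section
/- The derivation ∂₁ and the anti-automorphism τ commute modulo 2: for every word w in x, y, the element ∂₁(τ(w)) − τ(∂₁(w)) of ℌ has all of its integer coefficients even. -/
/-!
For `E a = ∂₁ (τ a) - τ (∂₁ a)`, the Leibniz rule and the anti-multiplicativity of `τ` give the
twisted rule `E (a b) = E b · τ a + τ b · E a`. Since `τ` sends words to words and multiplying by a
word keeps all coefficients even, `E w` is even for every word as soon as it is on the letters,
where `E x = -2xy` and `E y = 2xy`.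
-/

/- ℌ = ℚ⟨x,y⟩ realized as the monoid algebra of the free monoid on two letters,
   where `false` plays the role of the letter x and `true` of the letter y. -/
noncomputable section

namespace MonoidAlgebra

variable {k M : Type*} [Ring k] [Monoid M]

def coeffsIn (S : AddSubgroup k) : AddSubgroup k[M] where
  carrier := {p | ∀ m, p.coeff m ∈ S}
  zero_mem' _ := S.zero_mem
  add_mem' hp hq m := S.add_mem (hp m) (hq m)
  neg_mem' hp m := S.neg_mem (hp m)

variable {S : AddSubgroup k} {p : k[M]}

theorem mem_coeffsIn : p ∈ coeffsIn S ↔ ∀ m, p.coeff m ∈ S := .rfl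

theorem single_mem_coeffsIn {c : k} (hc : c ∈ S) (m : M) :
    single m c ∈ coeffsIn (M := M) S := by
  classical
  intro n
  rw [coeff_single, Finsupp.single_apply]
  split_ifs
  · exact hc
  · exact S.zero_mem

theorem mul_single_one_mem_coeffsIn (hp : p ∈ coeffsIn S) (w : M) :
    p * single w 1 ∈ coeffsIn S := by
  classical
  intro n
  rw [coeff_mul]
  refine S.sum_mem fun m _ ↦ ?_
  simp only [coeff_single, mul_one, mul_zero, ite_self, Finsupp.sum_single_index]
  split_ifs
  · exact hp m
  · exact S.zero_mem

theorem single_one_mul_mem_coeffsIn (hp : p ∈ coeffsIn S) (w : M) :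
    single w 1 * p ∈ coeffsIn S := by
  classical
  intro n
  rw [coeff_mul, coeff_single, Finsupp.sum_single_index (by simp)]
  refine S.sum_mem fun m _ ↦ ?_
  simp only [one_mul]
  split_ifs
  · exact hp m
  · exact S.zero_mem

end MonoidAlgebra

section Defect

variable {R : Type*} [Ring R] (D T : R →+ R)

theorem map_one_eq_zero_of_leibniz (hD : ∀ a b, D (a * b) = D a * b + a * D b) : D 1 = 0 := by
  simpa using hD 1 1

theorem defect_mul (hD : ∀ a b, D (a * b) = D a * b + a * D b)
    (hT : ∀ a b, T (a * b) = T b * T a) (a b : R) :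
    D (T (a * b)) - T (D (a * b)) =
      (D (T b) - T (D b)) * T a + T b * (D (T a) - T (D a)) := by
  rw [hT, hD, hD, map_add, hT, hT]
  noncomm_ring

end Defect

open MonoidAlgebra

section FreeMonoid

variable {k α : Type*} [Ring k]

theorem exists_map_single_one_eq_single_one (T : k[FreeMonoid α] → k[FreeMonoid α])
    (hT : ∀ a b, T (a * b) = T b * T a) (hT1 : T 1 = 1)
    (hTof : ∀ a, ∃ m, T (single (.of a) 1) = single m 1) (w : FreeMonoid α) :
    ∃ m, T (single w 1) = single m 1 := by
  induction w with
  | one => exact ⟨1, hT1⟩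
  | of a => exact hTof a
  | mul u v hu hv =>
    obtain ⟨mu, hmu⟩ := hu
    obtain ⟨mv, hmv⟩ := hv
    refine ⟨mv * mu, ?_⟩
    rw [← mul_one (1 : k), ← single_mul_single, hT, hmu, hmv, single_mul_single, mul_one]

theorem defect_mem_coeffsIn (S : AddSubgroup k) (D T : k[FreeMonoid α] →+ k[FreeMonoid α])
    (hD : ∀ a b, D (a * b) = D a * b + a * D b)
    (hT : ∀ a b, T (a * b) = T b * T a) (hT1 : T 1 = 1)
    (hTof : ∀ a, ∃ m, T (single (.of a) 1) = single m 1)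
    (hof : ∀ a, D (T (single (.of a) 1)) - T (D (single (.of a) 1)) ∈ coeffsIn S)
    (w : FreeMonoid α) :
    D (T (single w 1)) - T (D (single w 1)) ∈ coeffsIn S := by
  induction w with
  | one =>
    rw [← one_def, hT1, map_one_eq_zero_of_leibniz D hD, map_zero, sub_zero]
    exact zero_mem _
  | of a => exact hof a
  | mul u v hu hv =>
    obtain ⟨mu, hmu⟩ := exists_map_single_one_eq_single_one T hT hT1 hTof u
    obtain ⟨mv, hmv⟩ := exists_map_single_one_eq_single_one T hT hT1 hTof v
    rw [← mul_one (1 : k), ← single_mul_single, defect_mul D T hD hT]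
    exact add_mem (hmu ▸ mul_single_one_mem_coeffsIn hv mu)
      (hmv ▸ single_one_mul_mem_coeffsIn hu mv)

end FreeMonoid

theorem even2_iff_mem_coeffsIn (p : H) : Even2 p ↔ p ∈ coeffsIn (AddSubgroup.zmultiples 2) := by
  simp only [Even2, mem_coeffsIn, AddSubgroup.mem_zmultiples_iff, zsmul_eq_mul, mul_comm, eq_comm]

theorem X_mul_Y : X * Y = single (.of false * .of true) 1 := by
  rw [X, Y, single_mul_single, one_mul]

/-- Let `D = ∂₁` be the (unique) derivation of ℌ with
`∂₁(x) = xy` and `∂₁(y) = -xy`, and let `T = τ` be the (unique)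
anti-automorphism of ℌ with `τ(x) = y` and `τ(y) = x`.  Then `∂₁` and `τ`
commute modulo 2: for every word `w` in x, y the element
`∂₁(τ(w)) - τ(∂₁(w))` has all of its integer coefficients even. -/
theorem statement6 (D : H →ₗ[ℚ] H)
    (hleib : ∀ a b : H, D (a * b) = D a * b + a * D b)
    (hDx : D X = X * Y) (hDy : D Y = -(X * Y))
    (T : H →ₗ[ℚ] H)
    (hTmul : ∀ a b : H, T (a * b) = T b * T a)
    (hT1 : T 1 = 1) (hTx : T X = Y) (hTy : T Y = X)
    (w : FreeMonoid Bool) :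
    Even2 (D (T (MonoidAlgebra.single w 1)) - T (D (MonoidAlgebra.single w 1))) := by
  have hTof : ∀ b, ∃ m, T (single (.of b) 1) = single m 1
    | false => ⟨.of true, hTx⟩
    | true => ⟨.of false, hTy⟩
  have hTXY : T (X * Y) = X * Y := by rw [hTmul, hTx, hTy]
  have hof : ∀ b, D (T (single (.of b) 1)) - T (D (single (.of b) 1)) ∈
      coeffsIn (AddSubgroup.zmultiples (2 : ℚ))
    | false => by
      change D (T X) - T (D X) ∈ _
      rw [hTx, hDy, hDx, hTXY, X_mul_Y, ← neg_add', ← single_add, ← single_neg]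
      exact single_mem_coeffsIn (AddSubgroup.mem_zmultiples_iff.mpr ⟨-1, by norm_num⟩) _
    | true => by
      change D (T Y) - T (D Y) ∈ _
      rw [hTy, hDx, hDy, map_neg, hTXY, sub_neg_eq_add, X_mul_Y, ← single_add]
      exact single_mem_coeffsIn (AddSubgroup.mem_zmultiples_iff.mpr ⟨1, by norm_num⟩) _
  rw [even2_iff_mem_coeffsIn]
  exact defect_mem_coeffsIn _ D.toAddMonoidHom T.toAddMonoidHom hleib hTmul hT1 hTof hof w

end
end

section
/- For all n ≥ 1 the matrix A_n^{(1)} is upper triangular with every diagonal entry equal to 1; in particular det(A_n^{(1)}) = 1. -/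
/-- The left square half `A_n^{(1)}` of `A_n` (columns `j < 2^(n-1)`),
a square matrix of size `2^(n-1)`. -/
def A1mat (n : ℕ) : Matrix (Fin (2 ^ (n - 1))) (Fin (2 ^ (n - 1))) ℤ :=
  Matrix.of fun i j => Afun (n - 1) (i : ℕ) (j : ℕ)

/- Induct on the block structure: a row in the top block row sees `A_{n-1}` in the left half, and a
row `i` in the bottom block row has its first nonzero entry, the `1` of `E`, in column `i`. -/

theorem Afun_eq_zero_of_lt {m i j : ℕ} (hi : i < 2 ^ m) (hji : j < i) : Afun m i j = 0 := by
  induction m generalizing i j with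
  | zero => omega
  | succ m ih =>
    rw [Afun]
    by_cases htop : i < 2 ^ m
    · rw [if_pos htop, if_pos (by omega)]
      exact ih htop hji
    · rw [if_neg htop]
      split_ifs <;> omega

theorem Afun_self {m i : ℕ} (hi : i < 2 ^ m) : Afun m i i = 1 := by
  induction m generalizing i with
  | zero => simp [Afun, show i = 0 by omega]
  | succ m ih =>
    rw [Afun]
    by_cases htop : i < 2 ^ m
    · rw [if_pos htop, if_pos (by omega)]
      exact ih htop
    · rw [if_neg htop, if_neg (by omega), if_pos hi, if_pos rfl]

theorem A1mat_isUpperTriangular (n : ℕ) : (A1mat n).IsUpperTriangular :=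
  fun i _ hji => Afun_eq_zero_of_lt i.isLt hji

theorem A1mat_apply_self (n : ℕ) (i : Fin (2 ^ (n - 1))) : A1mat n i i = 1 :=
  Afun_self i.isLt

theorem statement9_general (n : ℕ) :
    (∀ i j : Fin (2 ^ (n - 1)), (j : ℕ) < (i : ℕ) → A1mat n i j = 0)
      ∧ (∀ i : Fin (2 ^ (n - 1)), A1mat n i i = 1)
      ∧ Matrix.det (A1mat n) = 1 := by
  refine ⟨fun _ _ hji => A1mat_isUpperTriangular n hji, A1mat_apply_self n, ?_⟩
  rw [Matrix.det_of_isUpperTriangular (A1mat_isUpperTriangular n)]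
  simp [A1mat_apply_self]

/-- For all `n ≥ 1` the matrix `A_n^{(1)}` is upper
triangular with every diagonal entry equal to `1`; in particular
`det(A_n^{(1)}) = 1`. -/
theorem statement9 (n : ℕ) (hn : 1 ≤ n) :
    (∀ i j : Fin (2 ^ (n - 1)), (j : ℕ) < (i : ℕ) → A1mat n i j = 0)
      ∧ (∀ i : Fin (2 ^ (n - 1)), A1mat n i i = 1)
      ∧ Matrix.det (A1mat n) = 1 :=
  statement9_general n
end

section
/- For all d ≥ 2, the product of B_d with the square matrix (ℰ_{d−1}^{(1)} | ℰ_{d−1}^{(2)}) (horizontal concatenation, of size 2^{d−1}) equals the 2×2 block matrix whose blocks of size 2^{d−2} are: B_{d−1} in the top-left, the zero matrix in the top-right, B_{d−1} A_{d−1} ℰ_{d−1}^{(1)} in the bottom-left, and B_{d−1} A_{d−1} ℰ_{d−1}^{(2)} in the bottom-right. -/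
/-- Entries of the `2^d × 2^(d-1)` matrix `ℰ_d^{(1)}`: `δ_{i,2j}` (0-indexed). -/
def E1fun (i j : ℕ) : ℤ := if i = 2 * j then 1 else 0

/-- Entries of the `2^d × 2^(d-1)` matrix `ℰ_d^{(2)}`: `δ_{i,2j+1}` (0-indexed). -/
def E2fun (i j : ℕ) : ℤ := if i = 2 * j + 1 then 1 else 0

/-- `Bfun m i j` is the `(i,j)` entry (0-indexed) of the square matrix
`B_{m+1}` of size `2^m`, so `B_d = Bfun (d-1)`.  `B_1 = (1)` and `B_d` is the
vertical block concatenation of `B_{d-1} (ℰ_{d-1}^{(1)})ᵗ` (on top) and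
`B_{d-1} A_{d-1}` (on the bottom): entrywise, since `(ℰ^{(1)})_{ij} = δ_{i,2j}`
(0-indexed), `(B_{d-1} (ℰ_{d-1}^{(1)})ᵗ)_{ij} = B_{d-1,(i,j/2)}` for even `j`
and `0` for odd `j`, while `(B_{d-1} A_{d-1})_{ij} = ∑_k B_{d-1,(i,k)} A_{d-1,(k,j)}`. -/
def Bfun : ℕ → ℕ → ℕ → ℤ
  | 0, i, j => if i = 0 ∧ j = 0 then 1 else 0
  | m + 1, i, j =>
    if i < 2 ^ m then
      (if j % 2 = 0 then Bfun m i (j / 2) else 0)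
    else
      ∑ k : Fin (2 ^ m), Bfun m (i - 2 ^ m) (k : ℕ) * Afun m (k : ℕ) j

/-- Entries of the square matrix `(ℰ_{d-1}^{(1)} | ℰ_{d-1}^{(2)})` of size
`2^(d-1)` (horizontal concatenation). -/
def Ecatfun (d i j : ℕ) : ℤ :=
  if j < 2 ^ (d - 2) then E1fun i j else E2fun i (j - 2 ^ (d - 2))

theorem Fin.sum_mul_ite_eq {n c : ℕ} (hc : c < n) (f : ℕ → ℤ) :
    ∑ k : Fin n, f k * (if (k : ℕ) = c then 1 else 0) = f c := by
  simp only [mul_ite, mul_one, mul_zero]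
  rw [Fin.sum_univ_eq_sum_range (fun k => if k = c then f k else 0), Finset.sum_ite_eq']
  simp [hc]

theorem sum_mul_E1fun {n j : ℕ} (hj : 2 * j < n) (f : ℕ → ℤ) :
    ∑ k : Fin n, f k * E1fun k j = f (2 * j) :=
  Fin.sum_mul_ite_eq hj f

theorem sum_mul_E2fun {n j : ℕ} (hj : 2 * j + 1 < n) (f : ℕ → ℤ) :
    ∑ k : Fin n, f k * E2fun k j = f (2 * j + 1) :=
  Fin.sum_mul_ite_eq hj f

theorem Ecatfun_of_lt {m k j : ℕ} (hj : j < 2 ^ m) : Ecatfun (m + 2) k j = E1fun k j := by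
  simp [Ecatfun, hj]

theorem Ecatfun_of_not_lt {m k j : ℕ} (hj : ¬j < 2 ^ m) :
    Ecatfun (m + 2) k j = E2fun k (j - 2 ^ m) := by
  simp [Ecatfun, hj]

theorem Bfun_succ_of_lt {m i k : ℕ} (hi : i < 2 ^ m) :
    Bfun (m + 1) i k = if k % 2 = 0 then Bfun m i (k / 2) else 0 := by
  simp [Bfun, hi]

theorem Bfun_succ_of_not_lt {m i k : ℕ} (hi : ¬i < 2 ^ m) :
    Bfun (m + 1) i k = ∑ l : Fin (2 ^ m), Bfun m (i - 2 ^ m) l * Afun m l k := by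
  simp [Bfun, hi]

theorem Bfun_succ_even {m i : ℕ} (hi : i < 2 ^ m) (j : ℕ) :
    Bfun (m + 1) i (2 * j) = Bfun m i j := by
  simp [Bfun_succ_of_lt hi]

theorem Bfun_succ_odd {m i : ℕ} (hi : i < 2 ^ m) (j : ℕ) : Bfun (m + 1) i (2 * j + 1) = 0 := by
  simp [Bfun_succ_of_lt hi]

theorem sum_Bfun_mul_Ecatfun (m : ℕ) (i j : Fin (2 ^ (m + 1))) :
    ∑ k : Fin (2 ^ (m + 1)), Bfun (m + 1) i k * Ecatfun (m + 2) k j =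
      if (i : ℕ) < 2 ^ m then
        (if (j : ℕ) < 2 ^ m then Bfun m i j else 0)
      else
        (if (j : ℕ) < 2 ^ m then
          ∑ k : Fin (2 ^ (m + 1)),
            (∑ l : Fin (2 ^ m), Bfun m (i - 2 ^ m) l * Afun m l k) * E1fun k j
        else
          ∑ k : Fin (2 ^ (m + 1)),
            (∑ l : Fin (2 ^ m), Bfun m (i - 2 ^ m) l * Afun m l k) * E2fun k (j - 2 ^ m)) := by
  have hsize : 2 ^ (m + 1) = 2 * 2 ^ m := pow_succ' 2 m
  have hj_lt := j.2
  split_ifs with hi hj hj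
  · rw [Finset.sum_congr rfl fun k _ => by rw [Ecatfun_of_lt hj], sum_mul_E1fun (by omega),
      Bfun_succ_even hi]
  · rw [Finset.sum_congr rfl fun k _ => by rw [Ecatfun_of_not_lt hj], sum_mul_E2fun (by omega),
      Bfun_succ_odd hi]
  · exact Finset.sum_congr rfl fun k _ => by rw [Ecatfun_of_lt hj, Bfun_succ_of_not_lt hi]
  · exact Finset.sum_congr rfl fun k _ => by rw [Ecatfun_of_not_lt hj, Bfun_succ_of_not_lt hi]

/-- For all `d ≥ 2`, the product of `B_d` with the square
matrix `(ℰ_{d-1}^{(1)} | ℰ_{d-1}^{(2)})` of size `2^(d-1)` equals the 2×2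
block matrix with blocks of size `2^(d-2)`: `B_{d-1}` in the top-left, `0` in
the top-right, `B_{d-1} A_{d-1} ℰ_{d-1}^{(1)}` in the bottom-left and
`B_{d-1} A_{d-1} ℰ_{d-1}^{(2)}` in the bottom-right (all products written out
entrywise). -/
theorem statement10 (d : ℕ) (hd : 2 ≤ d) (i j : Fin (2 ^ (d - 1))) :
    (∑ k : Fin (2 ^ (d - 1)), Bfun (d - 1) (i : ℕ) (k : ℕ) * Ecatfun d (k : ℕ) (j : ℕ)) =
      if (i : ℕ) < 2 ^ (d - 2) then
        (if (j : ℕ) < 2 ^ (d - 2) then Bfun (d - 2) (i : ℕ) (j : ℕ) else 0)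
      else
        (if (j : ℕ) < 2 ^ (d - 2) then
          ∑ k : Fin (2 ^ (d - 1)),
            (∑ l : Fin (2 ^ (d - 2)),
              Bfun (d - 2) ((i : ℕ) - 2 ^ (d - 2)) (l : ℕ) * Afun (d - 2) (l : ℕ) (k : ℕ))
              * E1fun (k : ℕ) (j : ℕ)
        else
          ∑ k : Fin (2 ^ (d - 1)),
            (∑ l : Fin (2 ^ (d - 2)),
              Bfun (d - 2) ((i : ℕ) - 2 ^ (d - 2)) (l : ℕ) * Afun (d - 2) (l : ℕ) (k : ℕ))
              * E2fun (k : ℕ) ((j : ℕ) - 2 ^ (d - 2))) := by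
  obtain ⟨m, rfl⟩ : ∃ m, d = m + 2 := ⟨d - 2, by omega⟩
  exact sum_Bfun_mul_Ecatfun m i j
end

section
/- For all d ≥ 3 the following congruences modulo 2 hold between vectors of elements of ℌ (all maps applied entrywise): ∂₁(L_x(w_{d−1})) ≡ A_{d−2}(L_x(w_d)) + L_{xy}(w_{d−1}) (mod 2) and ∂₁(L_{xy} L_x^{−1}(w_{d−1})) ≡ A_{d−2}(L_{xy} L_x^{−1}(w_d)) + L_{x²} L_y (L_x^{−1}(w_{d−1})) (mod 2), where a congruence mod 2 means all integer coefficients of the difference of corresponding entries are even. -/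
/- ℌ = ℚ⟨x,y⟩ realized as the monoid algebra of the free monoid on two letters,
   where `false` plays the role of the letter x and `true` of the letter y. -/
noncomputable section

/-- The `n`-th entry of `L_x⁻¹(w_d)`: the `n`-th monomial of degree `d` in
xℌy with its initial letter x removed. -/
def lxInv (d n : ℕ) : H :=
  MonoidAlgebra.single (FreeMonoid.ofList ((wordList d n).tail)) 1

/-!
On a monomial, `∂₁` replaces each letter in turn by `xy`, with sign `-1` exactly at the letters
`y`; so modulo 2, `∂₁` of a word is the sum of its single-letter `xy`-substitutions. For a word
`x b t` with `x t` the `i`-th entry of `w_{d-1}`, the substitutions inside `t`,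
together with the word `x b y t`, sum exactly to the `i`-th row of `A_{d-2}` applied to the
corresponding words of degree one more (induction on `d`). The two remaining substitutions, at
`x` and at `b`, give `x y b t + x x y t`, which is `x b y t` plus the correction term
`L_{xy}(w_{d-1})` (for `b = x`) resp. `L_{x²} L_y L_x⁻¹(w_{d-1})` (for `b = y`).
-/

namespace BoolWords

def mon (l : List Bool) : H := MonoidAlgebra.single (FreeMonoid.ofList l) 1

def replaceXY (l : List Bool) (k : ℕ) : List Bool := l.take k ++ [false, true] ++ l.drop (k + 1)

@[simp]
lemma replaceXY_cons_zero (b : Bool) (l : List Bool) :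
    replaceXY (b :: l) 0 = false :: true :: l := by
  simp [replaceXY]

@[simp]
lemma replaceXY_cons_succ (b : Bool) (l : List Bool) (k : ℕ) :
    replaceXY (b :: l) (k + 1) = b :: replaceXY l k := by
  simp [replaceXY]

lemma mon_append (l₁ l₂ : List Bool) : mon (l₁ ++ l₂) = mon l₁ * mon l₂ := by
  rw [mon, mon, mon, MonoidAlgebra.single_mul_single, one_mul, FreeMonoid.ofList_append]

lemma mon_cons (b : Bool) (l : List Bool) : mon (b :: l) = mon [b] * mon l :=
  mon_append [b] l

lemma mon_nil : mon [] = 1 := rfl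

lemma X_eq_mon : X = mon [false] := rfl

lemma Y_eq_mon : Y = mon [true] := rfl

lemma X_mul_Y : X * Y = mon [false, true] := (mon_append [false] [true]).symm

lemma map_one_of_leibniz (D : H →ₗ[ℚ] H)
    (hleib : ∀ a b : H, D (a * b) = D a * b + a * D b) :
    D 1 = 0 := by
  simpa using hleib 1 1

lemma derivation_mon (D : H →ₗ[ℚ] H) (hleib : ∀ a b : H, D (a * b) = D a * b + a * D b)
    (hDx : D X = X * Y) (hDy : D Y = -(X * Y)) (l : List Bool) :
    D (mon l) = ∑ k ∈ Finset.range l.length,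
      (if l.getD k false then (-1 : ℚ) else 1) • mon (replaceXY l k) := by
  induction l with
  | nil => simp [mon_nil, map_one_of_leibniz D hleib]
  | cons b l ih =>
    have hletter : D (mon [b]) = (if b then (-1 : ℚ) else 1) • mon [false, true] := by
      cases b
      · simpa [← X_eq_mon, ← X_mul_Y] using hDx
      · simpa [← Y_eq_mon, ← X_mul_Y] using hDy
    rw [mon_cons, hleib, ih, hletter, Finset.mul_sum, List.length_cons, Finset.sum_range_succ']
    simp only [smul_mul_assoc, mul_smul_comm, ← mon_append, List.cons_append,
      List.nil_append, replaceXY_cons_succ, replaceXY_cons_zero, List.getD_cons_succ,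
      List.getD_cons_zero]
    abel

def even2AddSubgroup : AddSubgroup H where
  carrier := {p | Even2 p}
  zero_mem' := fun _ => ⟨0, by simp⟩
  add_mem' := by
    rintro p q hp hq m
    obtain ⟨a, ha⟩ := hp m
    obtain ⟨b, hb⟩ := hq m
    exact ⟨a + b, by simp [ha, hb]; ring⟩
  neg_mem' := by
    rintro p hp m
    obtain ⟨a, ha⟩ := hp m
    exact ⟨-a, by simp [ha]⟩

lemma even2_neg_two_smul_mon (l : List Bool) : Even2 ((-2 : ℚ) • mon l) := by
  classical
  intro m
  refine ⟨if FreeMonoid.ofList l = m then -1 else 0, ?_⟩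
  by_cases h : FreeMonoid.ofList l = m <;> simp [mon, h]

lemma even2_derivation_mon_sub_sum (D : H →ₗ[ℚ] H)
    (hleib : ∀ a b : H, D (a * b) = D a * b + a * D b)
    (hDx : D X = X * Y) (hDy : D Y = -(X * Y)) (l : List Bool) :
    Even2 (D (mon l) - ∑ k ∈ Finset.range l.length, mon (replaceXY l k)) := by
  rw [derivation_mon D hleib hDx hDy, ← Finset.sum_sub_distrib]
  refine even2AddSubgroup.sum_mem fun k _ => ?_
  split
  · rw [show (-1 : ℚ) • mon (replaceXY l k) - mon (replaceXY l k)
        = (-2 : ℚ) • mon (replaceXY l k) by module]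
    exact even2_neg_two_smul_mon _
  · rw [one_smul, sub_self]
    exact even2AddSubgroup.zero_mem

/-- The word `w` with `x * w` the `i`-th monomial of degree `e + 2` in `xℌy`:
`wordList (e + 2) i = false :: tailWord e i`. -/
def tailWord (e i : ℕ) : List Bool :=
  ((List.range e).map fun k => Nat.testBit i (e - 1 - k)) ++ [true]

lemma tailWord_length (e i : ℕ) : (tailWord e i).length = e + 1 := by
  simp [tailWord]

lemma tailWord_zero (i : ℕ) : tailWord 0 i = [true] := rfl

lemma tailWord_succ (e i : ℕ) : tailWord (e + 1) i = i.testBit e :: tailWord e i := by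
  simp only [tailWord, List.range_succ_eq_map, List.map_cons, List.map_map, List.cons_append,
    Nat.add_sub_cancel, Nat.sub_zero]
  congr 2
  exact List.map_congr_left fun k _ => by simp only [Function.comp_apply]; congr 1; omega

lemma tailWord_succ_of_lt {e i : ℕ} (hi : i < 2 ^ e) :
    tailWord (e + 1) i = false :: tailWord e i := by
  rw [tailWord_succ, Nat.testBit_lt_two_pow hi]

lemma tailWord_succ_two_pow_add {e i : ℕ} (hi : i < 2 ^ e) :
    tailWord (e + 1) (2 ^ e + i) = true :: tailWord e i := by
  rw [tailWord_succ, Nat.testBit_two_pow_add_eq, Nat.testBit_lt_two_pow hi, Bool.not_false]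
  congr 1
  simp only [tailWord]
  congr 1
  exact List.map_congr_left fun k hk => Nat.testBit_two_pow_add_gt (by rw [List.mem_range] at hk; omega) i

lemma sum_range_two_pow_succ_smul_mon_tailWord (c : ℕ → ℚ) (pre : List Bool) (e : ℕ) :
    ∑ j ∈ Finset.range (2 ^ (e + 1)), c j • mon (pre ++ tailWord (e + 1) j)
      = ∑ j ∈ Finset.range (2 ^ e), c j • mon (pre ++ false :: tailWord e j)
        + ∑ j ∈ Finset.range (2 ^ e), c (2 ^ e + j) • mon (pre ++ true :: tailWord e j) := by
  rw [pow_succ, mul_two, Finset.sum_range_add]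
  congr 1 <;> refine Finset.sum_congr rfl fun j hj => ?_
  · rw [tailWord_succ_of_lt (Finset.mem_range.mp hj)]
  · rw [tailWord_succ_two_pow_add (Finset.mem_range.mp hj)]

lemma Afun_succ_upperLeft {e i j : ℕ} (hi : i < 2 ^ e) (hj : j < 2 ^ (e + 1)) :
    Afun (e + 1) i j = Afun e i j := by
  rw [Afun, if_pos hi, if_pos hj]

lemma Afun_succ_upperRight {e i : ℕ} (hi : i < 2 ^ e) (j : ℕ) :
    Afun (e + 1) i (2 ^ (e + 1) + j) = if j = i then 1 else 0 := by
  rw [Afun, if_pos hi, if_neg (by omega)]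
  split_ifs <;> omega

lemma Afun_succ_lowerLeft {e j : ℕ} (i : ℕ) (hj : j < 2 ^ (e + 1)) :
    Afun (e + 1) (2 ^ e + i) j = if j = 2 ^ e + i then 1 else 0 := by
  rw [Afun, if_neg (by omega)]
  split_ifs <;> omega

lemma Afun_succ_lowerRight (e i j : ℕ) :
    Afun (e + 1) (2 ^ e + i) (2 ^ (e + 1) + j) = Afun e i j := by
  have := Nat.pow_le_pow_right two_pos e.le_succ
  rw [Afun, if_neg (by omega), if_neg (by omega), if_neg (by omega),
    Nat.add_sub_cancel_left, Nat.add_sub_cancel_left]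

/-- The block recursion of `A` mirrors splitting off the leading bit of `i`. -/
lemma sum_Afun_smul_mon_tailWord (e : ℕ) {i : ℕ} (hi : i < 2 ^ e) (pre : List Bool) :
    ∑ j ∈ Finset.range (2 ^ (e + 1)), (Afun e i j : ℚ) • mon (pre ++ tailWord (e + 1) j)
      = mon (pre ++ true :: tailWord e i)
        + ∑ k ∈ Finset.range (e + 1), mon (pre ++ replaceXY (tailWord e i) k) := by
  induction e generalizing i pre with
  | zero =>
    obtain rfl : i = 0 := by simpa using hi
    simp [Finset.sum_range_succ, Afun, tailWord_succ, tailWord_zero, replaceXY, add_comm]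
  | succ e ih =>
    rw [sum_range_two_pow_succ_smul_mon_tailWord]
    rcases lt_or_ge i (2 ^ e) with hlo | hhi
    · have upper : ∀ j ∈ Finset.range (2 ^ (e + 1)),
          (Afun (e + 1) i j : ℚ) • mon (pre ++ false :: tailWord (e + 1) j)
            = (Afun e i j : ℚ) • mon ((pre ++ [false]) ++ tailWord (e + 1) j) := fun j hj => by
        rw [Afun_succ_upperLeft hlo (Finset.mem_range.mp hj), List.append_assoc,
          List.singleton_append]
      have lower : ∀ j ∈ Finset.range (2 ^ (e + 1)),
          (Afun (e + 1) i (2 ^ (e + 1) + j) : ℚ) • mon (pre ++ true :: tailWord (e + 1) j)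
            = if i = j then mon (pre ++ true :: tailWord (e + 1) j) else 0 := fun j _ => by
        rw [Afun_succ_upperRight hlo]
        split_ifs <;> first | omega | simp
      rw [Finset.sum_congr rfl upper, Finset.sum_congr rfl lower, Finset.sum_ite_eq,
        if_pos (Finset.mem_range.mpr (by omega)), ih hlo, tailWord_succ_of_lt hlo,
        Finset.sum_range_succ' _ (e + 1)]
      simp only [replaceXY_cons_succ, replaceXY_cons_zero, List.append_assoc,
        List.singleton_append]
      abel
    · obtain ⟨i, rfl⟩ := Nat.exists_eq_add_of_le hhi
      have hi' : i < 2 ^ e := by omega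
      have upper : ∀ j ∈ Finset.range (2 ^ (e + 1)),
          (Afun (e + 1) (2 ^ e + i) j : ℚ) • mon (pre ++ false :: tailWord (e + 1) j)
            = if 2 ^ e + i = j then mon (pre ++ false :: tailWord (e + 1) j) else 0 :=
        fun j hj => by
          rw [Afun_succ_lowerLeft i (Finset.mem_range.mp hj)]
          split_ifs <;> first | omega | simp
      have lower : ∀ j ∈ Finset.range (2 ^ (e + 1)),
          (Afun (e + 1) (2 ^ e + i) (2 ^ (e + 1) + j) : ℚ)
              • mon (pre ++ true :: tailWord (e + 1) j)
            = (Afun e i j : ℚ) • mon ((pre ++ [true]) ++ tailWord (e + 1) j) := fun j _ => by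
        rw [Afun_succ_lowerRight, List.append_assoc, List.singleton_append]
      rw [Finset.sum_congr rfl upper, Finset.sum_congr rfl lower, Finset.sum_ite_eq,
        if_pos (Finset.mem_range.mpr (by omega)), ih hi', tailWord_succ_two_pow_add hi',
        Finset.sum_range_succ' _ (e + 1)]
      simp only [replaceXY_cons_succ, replaceXY_cons_zero, List.append_assoc,
        List.singleton_append]
      abel

lemma sum_range_mon_replaceXY (b : Bool) (e : ℕ) {i : ℕ} (hi : i < 2 ^ e) :
    ∑ k ∈ Finset.range (e + 3), mon (replaceXY (false :: b :: tailWord e i) k)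
      = ∑ j ∈ Finset.range (2 ^ (e + 1)),
          (Afun e i j : ℚ) • mon (false :: b :: tailWord (e + 1) j)
        + mon (false :: (!b) :: b :: tailWord e i) := by
  have h := sum_Afun_smul_mon_tailWord e hi [false, b]
  simp only [List.cons_append, List.nil_append] at h
  rw [h, Finset.sum_range_succ', Finset.sum_range_succ']
  simp only [replaceXY_cons_succ, replaceXY_cons_zero]
  cases b <;> simp only [Bool.not_false, Bool.not_true] <;> abel

lemma even2_derivation_mon_tailWord (D : H →ₗ[ℚ] H)
    (hleib : ∀ a b : H, D (a * b) = D a * b + a * D b)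
    (hDx : D X = X * Y) (hDy : D Y = -(X * Y)) (b : Bool) (e : ℕ) {i : ℕ} (hi : i < 2 ^ e) :
    Even2 (D (mon (false :: b :: tailWord e i))
      - ∑ j ∈ Finset.range (2 ^ (e + 1)),
          (Afun e i j : ℚ) • mon (false :: b :: tailWord (e + 1) j)
      - mon (false :: (!b) :: b :: tailWord e i)) := by
  have h := even2_derivation_mon_sub_sum D hleib hDx hDy (false :: b :: tailWord e i)
  rwa [List.length_cons, List.length_cons, tailWord_length, sum_range_mon_replaceXY b e hi,
    ← sub_sub] at h

lemma wVec_eq_mon (d : ℕ) (i : Fin (2 ^ (d - 2))) :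
    wVec d i = mon (false :: tailWord (d - 2) i) :=
  rfl

lemma lxInv_eq_mon (d i : ℕ) : lxInv d i = mon (tailWord (d - 2) i) := rfl

lemma X_mul_wVec (d : ℕ) (i : Fin (2 ^ (d - 2))) :
    X * wVec d i = mon (false :: false :: tailWord (d - 2) i) := by
  rw [wVec_eq_mon, X_eq_mon, ← mon_append]
  rfl

lemma X_mul_Y_mul_wVec (d : ℕ) (i : Fin (2 ^ (d - 2))) :
    X * Y * wVec d i = mon (false :: true :: false :: tailWord (d - 2) i) := by
  rw [wVec_eq_mon, X_mul_Y, ← mon_append]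
  rfl

lemma X_mul_Y_mul_lxInv (d i : ℕ) :
    X * Y * lxInv d i = mon (false :: true :: tailWord (d - 2) i) := by
  rw [lxInv_eq_mon, X_mul_Y, ← mon_append]
  rfl

lemma X_mul_X_mul_Y_mul_lxInv (d i : ℕ) :
    X * X * (Y * lxInv d i) = mon (false :: false :: true :: tailWord (d - 2) i) := by
  rw [lxInv_eq_mon, Y_eq_mon, X_eq_mon, ← mon_append, ← mon_append, ← mon_append]
  rfl

end BoolWords

open BoolWords in
/-- Let `D = ∂₁` be the (unique) derivation of ℌ with
`∂₁(x) = xy` and `∂₁(y) = -xy`.  For all `d ≥ 3` the following congruences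
mod 2 hold entrywise (a congruence mod 2 means all integer coefficients of
the difference are even):
`∂₁(L_x(w_{d-1})) ≡ A_{d-2}(L_x(w_d)) + L_{xy}(w_{d-1})` and
`∂₁(L_{xy} L_x⁻¹(w_{d-1})) ≡ A_{d-2}(L_{xy} L_x⁻¹(w_d)) + L_{x²} L_y (L_x⁻¹(w_{d-1}))`. -/
theorem statement13 (D : H →ₗ[ℚ] H)
    (hleib : ∀ a b : H, D (a * b) = D a * b + a * D b)
    (hDx : D X = X * Y) (hDy : D Y = -(X * Y))
    (d : ℕ) (hd : 3 ≤ d) (i : Fin (2 ^ (d - 3))) :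
    Even2 (D (X * wVec (d - 1) i)
        - (∑ j : Fin (2 ^ (d - 2)), ((Afun (d - 3) (i : ℕ) (j : ℕ) : ℚ)) • (X * wVec d j))
        - X * Y * wVec (d - 1) i)
    ∧ Even2 (D (X * Y * lxInv (d - 1) (i : ℕ))
        - (∑ j : Fin (2 ^ (d - 2)),
            ((Afun (d - 3) (i : ℕ) (j : ℕ) : ℚ)) • (X * Y * lxInv d (j : ℕ)))
        - X * X * (Y * lxInv (d - 1) (i : ℕ))) := by
  obtain ⟨e, rfl⟩ : ∃ e, d = e + 3 := ⟨d - 3, by omega⟩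
  have hi : (i : ℕ) < 2 ^ e := i.isLt
  simp only [X_mul_wVec, X_mul_Y_mul_wVec, X_mul_Y_mul_lxInv, X_mul_X_mul_Y_mul_lxInv]
  rw [Fin.sum_univ_eq_sum_range
      (fun j => (Afun (e + 3 - 3) i j : ℚ) • mon (false :: false :: tailWord (e + 3 - 2) j)),
    Fin.sum_univ_eq_sum_range
      (fun j => (Afun (e + 3 - 3) i j : ℚ) • mon (false :: true :: tailWord (e + 3 - 2) j))]
  exact ⟨even2_derivation_mon_tailWord D hleib hDx hDy false e hi,
    even2_derivation_mon_tailWord D hleib hDx hDy true e hi⟩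
end
end
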